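/- Let F = E_k/E_{k-1} on the positive cone Γ⁺ ⊂ ℝⁿ, 2 ≤ k ≤ n. Then for every x ∈ Γ⁺, the partial derivatives of F satisfy Σ_{i=1}^n ∂F/∂x_i (x) ≥ 1. -/

import Mathlib

open Finset Polynomial

/-- The unnormalized `k`-th elementary symmetric polynomial in `n` variables. -/
noncomputable def esymmFun (n k : ℕ) (x : Fin n → ℝ) : ℝ :=
  ∑ s ∈ Finset.powersetCard k (Finset.univ : Finset (Fin n)), ∏ i ∈ s, x i

/-- The normalized `k`-th elementary symmetric function `E_k = σ_k / C(n,k)`. -/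
noncomputable def normE (n k : ℕ) (x : Fin n → ℝ) : ℝ := esymmFun n k x / (n.choose k : ℝ)


lemma esymmFun_pos {n k : ℕ} (hk : k ≤ n) (x : Fin n → ℝ) (hx : ∀ i, 0 < x i) :
    0 < esymmFun n k x := by
  refine Finset.sum_pos (fun s _ => Finset.prod_pos fun i _ => hx i) ?_
  rw [Finset.powersetCard_nonempty]
  simp [hk]

lemma pair_sum {n : ℕ} (k : ℕ) (F : Finset (Fin n) → Fin n → ℝ) :
    ∑ s ∈ powersetCard (k+1) (univ : Finset (Fin n)), ∑ j ∈ s, F (s.erase j) j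
      = ∑ t ∈ powersetCard k (univ : Finset (Fin n)), ∑ j ∈ univ \ t, F t j := by
  rw [Finset.sum_sigma' (powersetCard (k+1) (univ : Finset (Fin n))) _ (fun s j => F (s.erase j) j),
    Finset.sum_sigma' (powersetCard k (univ : Finset (Fin n))) _ (fun t j => F t j)]
  refine Finset.sum_nbij' (fun p => ⟨p.1.erase p.2, p.2⟩) (fun p => ⟨insert p.2 p.1, p.2⟩)
    ?_ ?_ ?_ ?_ ?_
  · rintro ⟨s, j⟩ hp
    simp only [Finset.mem_sigma, Finset.mem_powersetCard_univ, Finset.mem_sdiff,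
      Finset.mem_univ, true_and] at *
    exact ⟨by rw [Finset.card_erase_of_mem hp.2, hp.1]; omega, Finset.notMem_erase _ _⟩
  · rintro ⟨t, j⟩ hp
    simp only [Finset.mem_sigma, Finset.mem_powersetCard_univ, Finset.mem_sdiff,
      Finset.mem_univ, true_and] at *
    exact ⟨by rw [Finset.card_insert_of_notMem hp.2, hp.1], Finset.mem_insert_self _ _⟩
  · rintro ⟨s, j⟩ hp
    simp only [Finset.mem_sigma, Finset.mem_powersetCard_univ] at hp
    simp [Finset.insert_erase hp.2]
  · rintro ⟨t, j⟩ hp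
    simp only [Finset.mem_sigma, Finset.mem_powersetCard_univ, Finset.mem_sdiff,
      Finset.mem_univ, true_and] at hp
    simp [Finset.erase_insert hp.2]
  · rintro ⟨s, j⟩ _; rfl

lemma deriv_sum_id (n k : ℕ) (x : Fin n → ℝ) :
    ∑ s ∈ powersetCard (k+1) (univ : Finset (Fin n)), ∑ j ∈ s, ∏ l ∈ s.erase j, x l
      = ((n - k : ℕ) : ℝ) * esymmFun n k x := by
  rw [pair_sum k (fun t _ => ∏ l ∈ t, x l)]
  unfold esymmFun
  rw [Finset.mul_sum]
  refine Finset.sum_congr rfl fun t ht => ?_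
  rw [Finset.sum_const, nsmul_eq_mul, Finset.card_sdiff_of_subset (Finset.subset_univ t),
    Finset.card_univ, Fintype.card_fin, Finset.mem_powersetCard_univ.mp ht]

lemma two_esymm {m : ℕ} (g : Fin m → ℝ) :
    2 * esymmFun m 2 g = (∑ i, g i)^2 - ∑ i, (g i)^2 := by
  have h := pair_sum 1 (fun t j => (∏ l ∈ t, g l) * g j)
  have hl : ∑ s ∈ powersetCard 2 (univ : Finset (Fin m)), ∑ j ∈ s,
      (∏ l ∈ s.erase j, g l) * g j = 2 * esymmFun m 2 g := by
    unfold esymmFun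
    rw [Finset.mul_sum]
    refine Finset.sum_congr rfl fun s hs => ?_
    have hcard := Finset.mem_powersetCard_univ.mp hs
    have : ∀ j ∈ s, (∏ l ∈ s.erase j, g l) * g j = ∏ l ∈ s, g l := by
      intro j hj
      rw [mul_comm, Finset.mul_prod_erase _ _ hj]
    rw [Finset.sum_congr rfl this, Finset.sum_const, hcard, two_smul, two_mul]
  have hr : ∑ t ∈ powersetCard 1 (univ : Finset (Fin m)), ∑ j ∈ univ \ t,
      (∏ l ∈ t, g l) * g j = (∑ i, g i)^2 - ∑ i, (g i)^2 := by
    rw [Finset.powersetCard_one, Finset.sum_map]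
    have : ∀ i : Fin m, ∑ j ∈ univ \ {i}, (∏ l ∈ ({i} : Finset (Fin m)), g l) * g j
        = g i * (∑ j, g j) - g i * g i := by
      intro i
      rw [Finset.sdiff_singleton_eq_erase, Finset.prod_singleton, ← Finset.mul_sum,
        Finset.sum_erase_eq_sub (Finset.mem_univ i), mul_sub]
    have h2 : ∑ x : Fin m, ∑ j ∈ univ \ {x}, (∏ l ∈ ({x} : Finset (Fin m)), g l) * g j
        = ∑ i : Fin m, (g i * (∑ j, g j) - g i * g i) :=
      Finset.sum_congr rfl fun i _ => this i
    rw [show (∑ x : Fin m, ∑ j ∈ univ \ (⟨singleton, Finset.singleton_injective⟩ :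
        Function.Embedding (Fin m) (Finset (Fin m))) x, (∏ l ∈ (⟨singleton,
        Finset.singleton_injective⟩ : Function.Embedding (Fin m) (Finset (Fin m))) x, g l) * g j)
        = ∑ i : Fin m, (g i * (∑ j, g j) - g i * g i) from h2,
      Finset.sum_sub_distrib, ← Finset.sum_mul, sq]
    congr 1
    refine Finset.sum_congr rfl fun i _ => ?_
    rw [sq]
  rw [← hl, h, hr]

lemma esymm_compl {N j : ℕ} (hj : j ≤ N) (x : Fin N → ℝ) (hx : ∀ i, x i ≠ 0) :
    esymmFun N (N - j) x = (∏ i, x i) * esymmFun N j (fun i => (x i)⁻¹) := by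
  unfold esymmFun
  rw [Finset.mul_sum]
  refine Finset.sum_nbij' (fun t => tᶜ) (fun t => tᶜ) ?_ ?_ ?_ ?_ ?_
  · intro t ht
    rw [Finset.mem_powersetCard_univ] at *
    rw [Finset.card_compl, Fintype.card_fin, ht, Nat.sub_sub_self hj]
  · intro t ht
    rw [Finset.mem_powersetCard_univ] at *
    rw [Finset.card_compl, Fintype.card_fin, ht]
  · intro t _; exact compl_compl t
  · intro t _; exact compl_compl t
  · intro t ht
    have h1 : (∏ i, x i) = (∏ i ∈ t, x i) * ∏ i ∈ tᶜ, x i :=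
      (Finset.prod_mul_prod_compl t x).symm
    rw [h1, mul_assoc, ← Finset.prod_mul_distrib,
      Finset.prod_congr rfl (fun i _ => mul_inv_cancel₀ (hx i)), Finset.prod_const_one, mul_one]

lemma esymm_one {N : ℕ} (u : Fin N → ℝ) : esymmFun N 1 u = ∑ i, u i := by
  unfold esymmFun
  rw [Finset.powersetCard_one, Finset.sum_map]
  exact Finset.sum_congr rfl fun i _ => Finset.prod_singleton u i

lemma newton_base {m : ℕ} (x : Fin (m+2) → ℝ) (hx : ∀ i, 0 < x i) :
    esymmFun (m+2) (m+2) x * esymmFun (m+2) m x * (((m+2).choose (m+1) : ℝ))^2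
      ≤ esymmFun (m+2) (m+1) x ^ 2 * (((m+2).choose (m+2) : ℝ) * ((m+2).choose m : ℝ)) := by
  have hxne : ∀ i, x i ≠ 0 := fun i => (hx i).ne'
  have hP : esymmFun (m+2) (m+2) x = ∏ i, x i := by
    unfold esymmFun
    have h := Finset.powersetCard_self (univ : Finset (Fin (m+2)))
    rw [Finset.card_univ, Fintype.card_fin] at h
    rw [h, Finset.sum_singleton]
  have h1 : esymmFun (m+2) (m+1) x = (∏ i, x i) * ∑ i, (x i)⁻¹ := by
    have h := esymm_compl (N := m+2) (j := 1) (by omega) x hxne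
    rw [esymm_one] at h
    exact h
  have h2 : esymmFun (m+2) m x = (∏ i, x i) * esymmFun (m+2) 2 (fun i => (x i)⁻¹) :=
    esymm_compl (N := m+2) (j := 2) (by omega) x hxne
  set u : Fin (m+2) → ℝ := fun i => (x i)⁻¹ with hu
  set P : ℝ := ∏ i, x i with hPdef
  set S : ℝ := ∑ i, u i with hS
  set Q : ℝ := ∑ i, (u i)^2 with hQ
  have hPpos : 0 < P := Finset.prod_pos fun i _ => hx i
  have hCS : S^2 ≤ (m+2) * Q := by
    have h := sq_sum_le_card_mul_sum_sq (s := (univ : Finset (Fin (m+2)))) (f := u)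
    rw [Finset.card_univ, Fintype.card_fin] at h
    exact_mod_cast h
  have he2 : esymmFun (m+2) 2 u = (S^2 - Q)/2 := by
    have h := two_esymm u
    rw [← hS, ← hQ] at h
    linarith
  have hc0 : (((m+2).choose m : ℕ) : ℝ) = (m+2)*(m+1)/2 := by
    have hsym : (m+2).choose m = (m+2).choose 2 := Nat.choose_symm (n := m+2) (k := 2) (by omega)
    have h := Nat.choose_succ_right_eq (m+2) 1
    rw [Nat.choose_one_right] at h
    norm_num at h
    have h2 : (m+2).choose 2 * 2 = (m+2)*(m+1) := by omega
    rw [hsym]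
    field_simp
    exact_mod_cast h2
  rw [hP, h1, h2, he2, Nat.choose_self, Nat.choose_succ_self_right, hc0]
  push_cast
  nlinarith [mul_nonneg (mul_nonneg (sq_nonneg P) (sub_nonneg.mpr hCS))
    (show (0:ℝ) ≤ (m+2) by positivity)]

lemma esymm_nonneg {s : Multiset ℝ} (h : ∀ a ∈ s, 0 ≤ a) (j : ℕ) : 0 ≤ s.esymm j := by
  refine Multiset.sum_nonneg fun b hb => ?_
  rw [Multiset.mem_map] at hb
  obtain ⟨t, ht, rfl⟩ := hb
  rw [Multiset.mem_powersetCard] at ht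
  exact Multiset.prod_nonneg fun a ha => h a (Multiset.mem_of_le ht.1 ha)

lemma esymm_pos {s : Multiset ℝ} (h : ∀ a ∈ s, 0 < a) {j : ℕ} (hj : j ≤ Multiset.card s) :
    0 < s.esymm j := by
  have hne : Multiset.powersetCard j s ≠ 0 := by
    intro h0
    have := Multiset.card_powersetCard j s
    rw [h0] at this
    simp only [Multiset.card_zero] at this
    have := Nat.choose_pos hj; omega
  obtain ⟨t, ht⟩ := Multiset.exists_mem_of_ne_zero hne
  have htpos : 0 < t.prod := Multiset.prod_pos fun a ha =>
    h a (Multiset.mem_of_le (Multiset.mem_powersetCard.mp ht).1 ha)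
  have hle : t.prod ≤ s.esymm j := by
    refine Multiset.single_le_sum ?_ _ (Multiset.mem_map_of_mem _ ht)
    intro b hb
    rw [Multiset.mem_map] at hb
    obtain ⟨t', ht', rfl⟩ := hb
    rw [Multiset.mem_powersetCard] at ht'
    exact Multiset.prod_nonneg fun a ha => (h a (Multiset.mem_of_le ht'.1 ha)).le
  exact lt_of_lt_of_le htpos hle

lemma esymmFun_eq_multiset (n j : ℕ) (x : Fin n → ℝ) :
    esymmFun n j x = (Multiset.map x Finset.univ.val).esymm j := by
  rw [Finset.esymm_map_val]; rfl

lemma multiset_esymm_eq_fun (l : List ℝ) (m : ℕ) (hl : l.length = m) (j : ℕ) :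
    (l : Multiset ℝ).esymm j = esymmFun m j (fun i => l.get (Fin.cast hl.symm i)) := by
  subst hl
  rw [esymmFun_eq_multiset]
  congr 1
  rw [show (fun i => l.get (Fin.cast rfl i)) = l.get from rfl, Fin.univ_val_map, List.ofFn_get]


lemma exists_step (s : Multiset ℝ) (hpos : ∀ a ∈ s, 0 < a) (n : ℕ)
    (hcard : Multiset.card s = n + 1) (hn : 1 ≤ n) :
    ∃ t : Multiset ℝ, Multiset.card t = n ∧ (∀ a ∈ t, 0 < a) ∧
      ∀ j, j ≤ n → ((n+1 : ℕ) : ℝ) * t.esymm j = ((n + 1 - j : ℕ) : ℝ) * s.esymm j := by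
  set p : ℝ[X] := (s.map fun a => X + C a).prod with hp
  have hmono : p.Monic := monic_multiset_prod_of_monic _ _ fun a _ => monic_X_add_C a
  have hdeg : p.natDegree = n + 1 := by
    rw [hp, natDegree_multiset_prod_of_monic]
    · rw [Multiset.map_map]
      have : Multiset.map (natDegree ∘ fun a => X + C a) s = Multiset.map (fun _ => 1) s :=
        Multiset.map_congr rfl fun a _ => by simp [natDegree_X_add_C]
      rw [this, Multiset.map_const', Multiset.sum_replicate, smul_eq_mul, mul_one, hcard]
    · intro f hf
      rw [Multiset.mem_map] at hf
      obtain ⟨a, _, rfl⟩ := hf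
      exact monic_X_add_C a
  have hroots : p.roots = s.map (fun a => -a) := by
    have h1 : s.map (fun a => X + C a) = (s.map (fun a => -a)).map (fun a => X - C a) := by
      rw [Multiset.map_map]
      exact Multiset.map_congr rfl fun a _ => by simp [sub_neg_eq_add]
    rw [hp, h1, roots_multiset_prod_X_sub_C]
  have hproots_card : Multiset.card p.roots = n + 1 := by rw [hroots, Multiset.card_map, hcard]
  set q := derivative p with hq
  have hpne : p ≠ 0 := hmono.ne_zero
  have hqcard : n ≤ Multiset.card q.roots := by
    have h1 := p.card_roots_le_derivative
    rw [← hq] at h1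
    omega
  have hqne : q ≠ 0 := by
    intro h0
    rw [h0, roots_zero] at hqcard
    simp at hqcard
    omega
  have hqdeg_le : q.natDegree ≤ n := by
    have h1 := natDegree_derivative_lt (p := p) (by omega : p.natDegree ≠ 0)
    rw [← hq] at h1
    omega
  have hq_card_eq : Multiset.card q.roots = n :=
    le_antisymm (le_trans (card_roots' q) hqdeg_le) hqcard
  have hqdeg : q.natDegree = n := le_antisymm hqdeg_le (le_trans hqcard (card_roots' q))
  have hsplit : Splits q :=
    splits_iff_card_roots.mpr (hq_card_eq.trans hqdeg.symm)
  have hcoeffp : ∀ j, j ≤ n + 1 → p.coeff j = s.esymm (n + 1 - j) := by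
    intro j hj
    rw [hp, Multiset.prod_X_add_C_coeff s (by omega : j ≤ Multiset.card s), hcard]
  have hlead : q.leadingCoeff = ((n+1 : ℕ) : ℝ) := by
    rw [← coeff_natDegree, hqdeg, hq, coeff_derivative, hcoeffp (n+1) le_rfl]
    have h0 : s.esymm 0 = 1 := by simp [Multiset.esymm]
    rw [Nat.sub_self, h0]
    push_cast
    ring
  have hcoeff_nonneg : ∀ i, 0 ≤ q.coeff i := by
    intro i
    rw [hq, coeff_derivative]
    rcases le_or_gt (i+1) (n+1) with h | h
    · rw [hcoeffp _ h]
      have h1 := esymm_nonneg (fun a ha => (hpos a ha).le) (n+1-(i+1))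
      positivity
    · rw [coeff_eq_zero_of_natDegree_lt (by omega)]
      simp
  have hroots_neg : ∀ r ∈ q.roots, r < 0 := by
    intro r hr
    by_contra hrge
    push_neg at hrge
    have hz : q.eval r = 0 := (mem_roots hqne).mp hr
    have hpos0 : 0 < q.coeff 0 := by
      rw [hq, coeff_derivative, hcoeffp 1 (by omega)]
      have h1 := esymm_pos hpos (show n+1-1 ≤ Multiset.card s by omega)
      norm_num at h1 ⊢
      exact h1
    have heval : 0 < q.eval r := by
      rw [eval_eq_sum_range]
      have h0mem : 0 ∈ Finset.range (q.natDegree + 1) := by simp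
      calc (0:ℝ) < q.coeff 0 * r ^ 0 := by simpa using hpos0
        _ ≤ ∑ i ∈ Finset.range (q.natDegree + 1), q.coeff i * r ^ i :=
          Finset.single_le_sum (fun i _ => mul_nonneg (hcoeff_nonneg i) (pow_nonneg hrge i)) h0mem
    rw [hz] at heval
    exact lt_irrefl 0 heval
  refine ⟨q.roots.map (fun r => -r), by rw [Multiset.card_map, hq_card_eq], ?_, ?_⟩
  · intro a ha
    rw [Multiset.mem_map] at ha
    obtain ⟨r, hr, rfl⟩ := ha
    linarith [hroots_neg r hr]
  · intro j hj
    set t := q.roots.map (fun r => -r) with ht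
    have hcardt : Multiset.card t = n := by rw [ht, Multiset.card_map, hq_card_eq]
    have hqprod : q = C ((n+1:ℕ):ℝ) * (t.map fun a => X + C a).prod := by
      have h1 := hsplit.eq_prod_roots
      rw [hlead] at h1
      rw [h1]
      congr 1
      rw [ht, Multiset.map_map]
      exact congrArg Multiset.prod
        (Multiset.map_congr rfl fun r _ => by simp [C_neg, sub_eq_add_neg])
    have h2 : q.coeff (n - j) = ((n+1:ℕ):ℝ) * t.esymm j := by
      have hle : n - j ≤ Multiset.card t := by omega
      rw [hqprod, coeff_C_mul, Multiset.prod_X_add_C_coeff t hle, hcardt, Nat.sub_sub_self hj]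
    have h3 : q.coeff (n - j) = ((n + 1 - j : ℕ) : ℝ) * s.esymm j := by
      rw [hq, coeff_derivative, hcoeffp (n - j + 1) (by omega)]
      have e1 : n + 1 - (n - j + 1) = j := by omega
      rw [e1]
      have e2 : ((n - j : ℕ) : ℝ) + 1 = ((n + 1 - j : ℕ) : ℝ) := by
        rw [Nat.cast_sub hj, Nat.cast_sub (by omega)]
        push_cast
        ring
      rw [e2, mul_comm]
    rw [← h2]
    exact h3


lemma newtonM (N : ℕ) : ∀ (s : Multiset ℝ), Multiset.card s = N → (∀ a ∈ s, 0 < a) →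
    ∀ m : ℕ, m + 2 ≤ N →
    s.esymm (m+2) / (N.choose (m+2) : ℝ) * (s.esymm m / (N.choose m : ℝ))
      ≤ (s.esymm (m+1) / (N.choose (m+1) : ℝ))^2 := by
  induction N with
  | zero => intro s hc hp m hm; omega
  | succ n ih =>
    intro s hc hp m hm
    rcases eq_or_lt_of_le hm with heq | hlt
    · -- base case : card s = m + 2
      have hl : s.toList.length = m + 2 := by rw [Multiset.length_toList, hc, ← heq]
      set x : Fin (m+2) → ℝ := fun i => s.toList.get (Fin.cast hl.symm i) with hxdef
      have hx : ∀ i, 0 < x i := by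
        intro i
        apply hp
        rw [← Multiset.coe_toList s]
        rw [Multiset.mem_coe]
        exact s.toList.get_mem _
      have he : ∀ j, s.esymm j = esymmFun (m+2) j x := by
        intro j
        conv_lhs => rw [← Multiset.coe_toList s]
        exact multiset_esymm_eq_fun s.toList (m+2) hl j
      rw [he, he, he, ← heq]
      have hb := newton_base x hx
      have hc1 : (0:ℝ) < ((m+2).choose (m+1) : ℝ) := by
        exact_mod_cast Nat.choose_pos (by omega)
      have hc2 : (0:ℝ) < ((m+2).choose (m+2) : ℝ) := by
        exact_mod_cast Nat.choose_pos (by omega)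
      have hc0 : (0:ℝ) < ((m+2).choose m : ℝ) := by
        exact_mod_cast Nat.choose_pos (by omega)
      rw [div_mul_div_comm, div_pow, div_le_div_iff₀ (by positivity) (by positivity)]
      exact hb
    · -- inductive step
      obtain ⟨t, hct, htpos, hid⟩ := exists_step s hp n hc (by omega)
      have key : ∀ j, j ≤ n →
          s.esymm j / ((n+1).choose j : ℝ) = t.esymm j / (n.choose j : ℝ) := by
        intro j hj
        have c3 : (n+1) * n.choose j = (n+1).choose j * (n+1-j) :=
          (Nat.add_one_mul_choose_eq n j).trans (Nat.choose_succ_right_eq (n+1) j)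
        have c3c : ((n+1:ℕ):ℝ) * (n.choose j : ℝ) = ((n+1).choose j : ℝ) * ((n+1-j : ℕ):ℝ) := by
          exact_mod_cast congrArg (Nat.cast : ℕ → ℝ) c3
        have hA : (0:ℝ) < ((n+1).choose j : ℝ) := by
          exact_mod_cast Nat.choose_pos (by omega)
        have hB : (0:ℝ) < (n.choose j : ℝ) := by
          exact_mod_cast Nat.choose_pos hj
        rw [div_eq_div_iff hA.ne' hB.ne']
        have h9 : ((n+1:ℕ):ℝ) * (s.esymm j * (n.choose j : ℝ))
            = ((n+1:ℕ):ℝ) * (t.esymm j * ((n+1).choose j : ℝ)) := by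
          linear_combination s.esymm j * c3c - ((n+1).choose j : ℝ) * (hid j hj)
        have hnne : ((n+1:ℕ):ℝ) ≠ 0 := by positivity
        exact mul_left_cancel₀ hnne h9
      rw [key (m+2) (by omega), key (m+1) (by omega), key m (by omega)]
      exact ih t hct htpos m (by omega)

lemma newton_fun {n m : ℕ} (h : m + 2 ≤ n) (x : Fin n → ℝ) (hx : ∀ i, 0 < x i) :
    normE n (m+2) x * normE n m x ≤ normE n (m+1) x ^ 2 := by
  have hs : Multiset.card (Multiset.map x Finset.univ.val) = n := by
    rw [Multiset.card_map]
    exact Finset.card_fin n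
  have hmem : ∀ a ∈ Multiset.map x Finset.univ.val, 0 < a := by
    intro a ha
    rw [Multiset.mem_map] at ha
    obtain ⟨i, _, rfl⟩ := ha
    exact hx i
  have h0 := newtonM n (Multiset.map x Finset.univ.val) hs hmem m h
  unfold normE
  rw [esymmFun_eq_multiset n (m+2) x, esymmFun_eq_multiset n (m+1) x,
    esymmFun_eq_multiset n m x]
  exact h0


lemma hasFDerivAt_esymmFun (n k : ℕ) (x : Fin n → ℝ) :
    HasFDerivAt (esymmFun n k)
      (∑ s ∈ powersetCard k (univ : Finset (Fin n)), ∑ j ∈ s,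
        (∏ l ∈ s.erase j, x l) • (ContinuousLinearMap.proj j : (Fin n → ℝ) →L[ℝ] ℝ)) x :=
  HasFDerivAt.fun_sum fun s _ => HasFDerivAt.finset_prod fun i _ => hasFDerivAt_apply i x

/-- For `F = E_k/E_{k-1}`, the sum of partial derivatives is at least `1` on the positive cone. -/
theorem sum_partials_ge_one (n k : ℕ) (hk1 : 2 ≤ k) (hk2 : k ≤ n)
    (x : Fin n → ℝ) (hx : ∀ i, 0 < x i) :
    1 ≤ ∑ i, fderiv ℝ (fun y => normE n k y / normE n (k - 1) y) x (Pi.single i 1) := by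
  obtain ⟨m, rfl⟩ : ∃ m, k = m + 2 := ⟨k - 2, by omega⟩
  set σ2 := esymmFun n (m+2) x with hσ2
  set σ1 := esymmFun n (m+1) x with hσ1
  set σ0 := esymmFun n m x with hσ0
  have hσ2pos : 0 < σ2 := esymmFun_pos (by omega) x hx
  have hσ1pos : 0 < σ1 := esymmFun_pos (by omega) x hx
  have hσ0pos : 0 < σ0 := esymmFun_pos (by omega) x hx
  set c2 : ℝ := (n.choose (m+2) : ℝ) with hc2def
  set c1 : ℝ := (n.choose (m+1) : ℝ) with hc1def
  set c0 : ℝ := (n.choose m : ℝ) with hc0def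
  have hc2pos : 0 < c2 := by rw [hc2def]; exact_mod_cast Nat.choose_pos (by omega)
  have hc1pos : 0 < c1 := by rw [hc1def]; exact_mod_cast Nat.choose_pos (by omega)
  have hc0pos : 0 < c0 := by rw [hc0def]; exact_mod_cast Nat.choose_pos (by omega)
  set a : ℝ := ((n - (m+1) : ℕ) : ℝ) with hadef
  set b : ℝ := ((n - m : ℕ) : ℝ) with hbdef
  have hb0 : 0 ≤ b := by rw [hbdef]; positivity
  have hHxval : normE n (m+1) x = σ1 / c1 := rfl
  have hHx : normE n (m+1) x ≠ 0 := by rw [hHxval]; positivity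
  set D2 := ∑ s ∈ powersetCard (m+2) (univ : Finset (Fin n)), ∑ j ∈ s,
      (∏ l ∈ s.erase j, x l) • (ContinuousLinearMap.proj j : (Fin n → ℝ) →L[ℝ] ℝ) with hD2def
  set D1 := ∑ s ∈ powersetCard (m+1) (univ : Finset (Fin n)), ∑ j ∈ s,
      (∏ l ∈ s.erase j, x l) • (ContinuousLinearMap.proj j : (Fin n → ℝ) →L[ℝ] ℝ) with hD1def
  have hG : HasFDerivAt (fun y => normE n (m+2) y) (c2⁻¹ • D2) x := by
    have h1 := (hasFDerivAt_esymmFun n (m+2) x).const_mul c2⁻¹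
    have h2 : (fun y => c2⁻¹ * esymmFun n (m+2) y) = fun y => normE n (m+2) y := by
      funext y
      rw [normE, div_eq_inv_mul]
    rw [← h2]
    exact h1
  have hH : HasFDerivAt (fun y => normE n (m+1) y) (c1⁻¹ • D1) x := by
    have h1 := (hasFDerivAt_esymmFun n (m+1) x).const_mul c1⁻¹
    have h2 : (fun y => c1⁻¹ * esymmFun n (m+1) y) = fun y => normE n (m+1) y := by
      funext y
      rw [normE, div_eq_inv_mul]
    rw [← h2]
    exact h1
  have hInv : HasFDerivAt (fun y => (normE n (m+1) y)⁻¹)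
      ((-(normE n (m+1) x ^ 2)⁻¹) • (c1⁻¹ • D1)) x :=
    (hasDerivAt_inv hHx).comp_hasFDerivAt x hH
  have hF : HasFDerivAt (fun y => normE n (m+2) y / normE n (m+1) y)
      (normE n (m+2) x • ((-(normE n (m+1) x ^ 2)⁻¹) • (c1⁻¹ • D1))
        + (normE n (m+1) x)⁻¹ • (c2⁻¹ • D2)) x := by
    have h1 := hG.mul hInv
    have h2 : (fun y => normE n (m+2) y * (normE n (m+1) y)⁻¹)
        = fun y => normE n (m+2) y / normE n (m+1) y := by
      funext y
      rw [div_eq_mul_inv]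
    rw [← h2]
    exact h1
  show 1 ≤ ∑ i, fderiv ℝ (fun y => normE n (m+2) y / normE n (m+1) y) x (Pi.single i 1)
  rw [hF.fderiv, ← map_sum]
  have hsum : (∑ i, Pi.single i (1:ℝ)) = (fun _ : Fin n => (1:ℝ)) := Finset.univ_sum_single _
  rw [hsum]
  have hD2val : D2 (fun _ => (1:ℝ)) = a * σ1 := by
    rw [hD2def]
    simp only [ContinuousLinearMap.sum_apply, ContinuousLinearMap.smul_apply,
      ContinuousLinearMap.proj_apply, smul_eq_mul, mul_one]
    exact deriv_sum_id n (m+1) x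
  have hD1val : D1 (fun _ => (1:ℝ)) = b * σ0 := by
    rw [hD1def]
    simp only [ContinuousLinearMap.sum_apply, ContinuousLinearMap.smul_apply,
      ContinuousLinearMap.proj_apply, smul_eq_mul, mul_one]
    exact deriv_sum_id n m x
  simp only [ContinuousLinearMap.add_apply, ContinuousLinearMap.smul_apply, hD1val, hD2val,
    smul_eq_mul, hHxval, show normE n (m+2) x = σ2 / c2 from rfl]
  have hNewton := newton_fun (show m + 2 ≤ n by omega) x hx
  rw [show normE n (m+2) x = σ2/c2 from rfl, show normE n (m+1) x = σ1/c1 from rfl,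
    show normE n m x = σ0/c0 from rfl, div_mul_div_comm, div_pow,
    div_le_div_iff₀ (by positivity) (by positivity)] at hNewton
  have id1 : c2 * (m+2) = c1 * a := by
    rw [hc2def, hc1def, hadef]
    exact_mod_cast congrArg (Nat.cast : ℕ → ℝ) (Nat.choose_succ_right_eq n (m+1))
  have id2 : c1 * (m+1) = c0 * b := by
    rw [hc1def, hc0def, hbdef]
    exact_mod_cast congrArg (Nat.cast : ℕ → ℝ) (Nat.choose_succ_right_eq n m)
  have hv' : σ2 / c2 * (-((σ1 / c1) ^ 2)⁻¹ * (c1⁻¹ * (b * σ0))) + (σ1 / c1)⁻¹ * (c2⁻¹ * (a * σ1))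
      = (a*σ1^2*c1 - b*σ2*σ0*c1) / (c2*σ1^2) := by
    field_simp
    ring
  rw [hv', one_le_div (by positivity)]
  have e1 : a*c1^2*σ1^2 = (m+2)*c2*c1*σ1^2 := by linear_combination (-(c1*σ1^2)) * id1
  have e2 : b*c0*σ1^2*c2 = (m+1)*c1*σ1^2*c2 := by linear_combination (-(σ1^2*c2)) * id2
  have hbn : b*(σ2*σ0*c1^2) ≤ b*(σ1^2*(c2*c0)) := mul_le_mul_of_nonneg_left hNewton hb0
  have hfinal : c1 * (c2*σ1^2) ≤ c1 * (a*σ1^2*c1 - b*σ2*σ0*c1) := by linarith [e1, e2, hbn]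
  exact (mul_le_mul_iff_right₀ hc1pos).mp hfinal
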